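/- arXiv:1410.1802 — 2 statements merged into one kernel-verified Lean document; each statement's English description precedes it below -/
import Mathlib

section
/- Let p, m ≥ 1 be integers, let (Ω, ℱ, P) be a probability space carrying, for each T > 0, real random variables Z_{T,ij} (1 ≤ i ≤ p, 1 ≤ j ≤ m), and let W = (W_1,…,W_p) be a random vector with values in ℝ^p. Suppose that (a) for each j ≤ m the random vector (Z_{T,1j},…,Z_{T,pj}) converges in distribution to W as T → ∞, and (b) for each i ≤ p, each 2 ≤ j ≤ m and each T > 0, Z_{T,ij} ≤ Z_{T,i1} almost surely. Then the pm-dimensional random vector ((Z_{T,11},…,Z_{T,p1}), (Z_{T,12},…,Z_{T,p2}), …, (Z_{T,1m},…,Z_{T,pm})) converges in distribution, as T → ∞, to (W, W, …, W) (m identical copies of W). -/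
open MeasureTheory ProbabilityTheory Real Set Filter

noncomputable section

namespace Piterbarg

/-- `a_T = √(2 ln T)`. -/
def aT (T : ℝ) : ℝ := Real.sqrt (2 * Real.log T)

/-- `b_T`-type normalization with Pickands constant `H`:
`a_T + a_T⁻¹ ln((2π)^{-1/2} C^{1/α} H a_T^{-1+2/α})`. -/
def bTH (C alpha H T : ℝ) : ℝ :=
  aT T + Real.log ((2 * Real.pi) ^ (-(1:ℝ)/2) * C ^ ((1:ℝ)/alpha) * H *
    aT T ^ (-(1:ℝ) + 2/alpha)) / aT T

/-- normalization for a sparse grid: `a_T - a_T⁻¹ ln(a_T δ(T) √(2π))`. -/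
def bSparse (delta : ℝ → ℝ) (T : ℝ) : ℝ :=
  aT T - Real.log (aT T * delta T * Real.sqrt (2 * Real.pi)) / aT T

/-- the uniform grid `𝔑(δ) = {kδ(T) : k ∈ ℕ}`. -/
def gridSet (delta : ℝ → ℝ) (T : ℝ) : Set ℝ := {s : ℝ | ∃ k : ℕ, s = (k : ℝ) * delta T}

/-- sparse grid: `δ(T)(2 ln T)^{1/α} → ∞` and `δ` bounded. -/
def IsSparseGrid (alpha : ℝ) (delta : ℝ → ℝ) : Prop :=
  (∀ T, 0 < delta T) ∧ (∃ d0 > 0, ∀ T, delta T ≤ d0) ∧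
    Tendsto (fun T => delta T * (2 * Real.log T) ^ ((1:ℝ)/alpha)) atTop atTop

/-- dense grid: `δ(T)(2 ln T)^{1/α} → 0`. -/
def IsDenseGrid (alpha : ℝ) (delta : ℝ → ℝ) : Prop :=
  (∀ T, 0 < delta T) ∧
    Tendsto (fun T => delta T * (2 * Real.log T) ^ ((1:ℝ)/alpha)) atTop (nhds 0)

/-- Pickands grid: `δ(T) = D (2 ln T)^{-1/α}`. -/
def IsPickandsGrid (alpha D : ℝ) (delta : ℝ → ℝ) : Prop :=
  0 < D ∧ ∀ T, delta T = D * (2 * Real.log T) ^ (-(1:ℝ)/alpha)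

/-- A family of random variables is centered (jointly) Gaussian: every finite linear
combination has a centered Gaussian law. -/
def IsCenteredGaussianFamily {Ω : Type*} [MeasurableSpace Ω] (P : Measure Ω)
    {ι : Type*} (Y : ι → Ω → ℝ) : Prop :=
  ∀ (n : ℕ) (idx : Fin n → ι) (c : Fin n → ℝ), ∃ v : NNReal,
    Measure.map (fun ω => ∑ i, c i * Y (idx i) ω) P = gaussianReal 0 v

/-- Hypotheses on the centered stationary Gaussian vector process `X` with
cross-correlation functions `r` satisfying the local condition (A1). -/
structure GaussVecHyp {Ω : Type*} [MeasurableSpace Ω] (P : Measure Ω) {p : ℕ}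
    (X : Fin p → ℝ → Ω → ℝ) (r : Fin p → Fin p → ℝ → ℝ) (C alpha : ℝ) : Prop where
  gaussian : IsCenteredGaussianFamily P (fun kt : Fin p × ℝ => X kt.1 kt.2)
  contPaths : ∀ k ω, Continuous fun t => X k t ω
  covariance : ∀ k l s t, 0 ≤ s → 0 ≤ t → ∫ ω, X k s ω * X l (s + t) ω ∂P = r k l t
  unitVar : ∀ k, r k k 0 = 1
  localCorr : ∀ k, Tendsto (fun t => (r k k t - (1 - C * |t| ^ alpha)) / |t| ^ alpha)
      (nhdsWithin 0 (Ioi 0)) (nhds 0)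
  corrLtOne : ∀ k, ∀ t > (0:ℝ), r k k t < 1

/-- One-dimensional version of `GaussVecHyp`. -/
structure GaussHyp1 {Ω : Type*} [MeasurableSpace Ω] (P : Measure Ω)
    (X : ℝ → Ω → ℝ) (r : ℝ → ℝ) (C alpha : ℝ) : Prop where
  gaussian : IsCenteredGaussianFamily P (fun t : ℝ => X t)
  contPaths : ∀ ω, Continuous fun t => X t ω
  covariance : ∀ s t, 0 ≤ s → 0 ≤ t → ∫ ω, X s ω * X (s + t) ω ∂P = r t
  unitVar : r 0 = 1
  localCorr : Tendsto (fun t => (r t - (1 - C * |t| ^ alpha)) / |t| ^ alpha)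
      (nhdsWithin 0 (Ioi 0)) (nhds 0)
  corrLtOne : ∀ t > (0:ℝ), r t < 1

/-- Covariance matrix of the auxiliary Gaussian vector `Z`. -/
def covZ {p : ℕ} (rr : Fin p → Fin p → ℝ) (k l : Fin p) : ℝ :=
  if k = l then 1
  else if 0 < rr k k * rr l l then rr k l / Real.sqrt (rr k k * rr l l) else 0

/-- Hypotheses on the auxiliary centered Gaussian vector `Z`. -/
structure ZHyp {Ω : Type*} [MeasurableSpace Ω] (P : Measure Ω) {p : ℕ}
    (Z : Fin p → Ω → ℝ) (rr : Fin p → Fin p → ℝ) : Prop where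
  gaussian : IsCenteredGaussianFamily P Z
  cov : ∀ k l, ∫ ω, Z k ω * Z l ω ∂P = covZ rr k l
  posdef : ∀ c : Fin p → ℝ, c ≠ 0 → 0 < ∑ k, ∑ l, c k * c l * covZ rr k l

/-- Joint distribution function of normalized maxima over three time sets. -/
def pTOn {Ω : Type*} [MeasurableSpace Ω] (P : Measure Ω) {p : ℕ}
    (X : Fin p → ℝ → Ω → ℝ) (A0 A1 A2 : Set ℝ) (c0 c1 c2 scale : ℝ)
    (x y1 y2 : Fin p → ℝ) : ℝ :=
  (P {ω | ∀ k, (∀ t ∈ A0, scale * (X k t ω - c0) ≤ x k) ∧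
      (∀ t ∈ A1, scale * (X k t ω - c1) ≤ y1 k) ∧
      (∀ t ∈ A2, scale * (X k t ω - c2) ≤ y2 k)}).toReal

/-- `p_T(x,y₁,y₂)`: joint distribution function of the normalized maxima of `X` over
`[0,T]` and over the two grids intersected with `[0,T]`. -/
def pT {Ω : Type*} [MeasurableSpace Ω] (P : Measure Ω) {p : ℕ}
    (X : Fin p → ℝ → Ω → ℝ) (delta1 delta2 b0 b1 b2 : ℝ → ℝ) (T : ℝ)
    (x y1 y2 : Fin p → ℝ) : ℝ :=
  pTOn P X (Icc 0 T) (gridSet delta1 T ∩ Icc 0 T) (gridSet delta2 T ∩ Icc 0 T)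
    (b0 T) (b1 T) (b2 T) (aT T) x y1 y2

/-- The limiting mixed distribution
`E[exp(-∑ₖ f(xₖ,y_{k1},y_{k2}) e^{-r_{kk}+√(2 r_{kk}) Z_k})]`. -/
def limitExpect {Ω : Type*} [MeasurableSpace Ω] (P : Measure Ω) {p : ℕ}
    (Z : Fin p → Ω → ℝ) (rr : Fin p → Fin p → ℝ) (f : ℝ → ℝ → ℝ → ℝ)
    (x y1 y2 : Fin p → ℝ) : ℝ :=
  ∫ ω, Real.exp (- ∑ k, f (x k) (y1 k) (y2 k) *
      Real.exp (- rr k k + Real.sqrt (2 * rr k k) * Z k ω)) ∂P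

/-- `B*(t) = √2 B_{α/2}(t) - |t|^α`. -/
def Bstar {Ω : Type*} (alpha : ℝ) (B : ℝ → Ω → ℝ) (t : ℝ) (ω : Ω) : ℝ :=
  Real.sqrt 2 * B t ω - |t| ^ alpha

/-- `B` is a standard fractional Brownian motion with Hurst index `α/2`. -/
structure FBMHyp {Ω : Type*} [MeasurableSpace Ω] (Q : Measure Ω) (alpha : ℝ)
    (B : ℝ → Ω → ℝ) : Prop where
  gaussian : IsCenteredGaussianFamily Q (fun t : ℝ => B t)
  contPaths : ∀ ω, Continuous fun t => B t ω
  cov : ∀ s t, 0 ≤ s → 0 ≤ t →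
    ∫ ω, B s ω * B t ω ∂Q = (s ^ alpha + t ^ alpha - |s - t| ^ alpha) / 2

/-- `max_{t ∈ [0,λ]} B*(t)`. -/
def supCont {Ω : Type*} (alpha : ℝ) (B : ℝ → Ω → ℝ) (lam : ℝ) (ω : Ω) : ℝ :=
  ⨆ t : Icc (0:ℝ) lam, Bstar alpha B t ω

/-- `max_{k ∈ ℕ, kD ∈ [0,λ]} B*(kD)`. -/
def supGrid {Ω : Type*} (alpha : ℝ) (B : ℝ → Ω → ℝ) (D lam : ℝ) (ω : Ω) : ℝ :=
  ⨆ k : {k : ℕ // (k:ℝ) * D ≤ lam}, Bstar alpha B ((k.1 : ℝ) * D) ω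

/-- `H` is the Pickands constant `H_α`. -/
def IsPickandsConst {Ω : Type*} [MeasurableSpace Ω] (Q : Measure Ω) (alpha : ℝ)
    (B : ℝ → Ω → ℝ) (H : ℝ) : Prop :=
  0 < H ∧
    Tendsto (fun lam => (∫ ω, Real.exp (supCont alpha B lam ω) ∂Q) / lam) atTop (nhds H)

/-- `H` is the Pickands constant `H_{D,α}`. -/
def IsPickandsGridConst {Ω : Type*} [MeasurableSpace Ω] (Q : Measure Ω) (alpha : ℝ)
    (B : ℝ → Ω → ℝ) (D H : ℝ) : Prop :=
  0 < H ∧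
    Tendsto (fun lam => (∫ ω, Real.exp (supGrid alpha B D lam ω) ∂Q) / lam) atTop (nhds H)

/-- event `max_{t ∈ [0,λ]} B*(t) > u`. -/
def contExceeds {Ω : Type*} (alpha : ℝ) (B : ℝ → Ω → ℝ) (lam u : ℝ) : Set Ω :=
  {ω | ∃ t ∈ Icc (0:ℝ) lam, u < Bstar alpha B t ω}

/-- event `max_{k ∈ ℕ, kD ∈ [0,λ]} B*(kD) > u`. -/
def gridExceeds {Ω : Type*} (alpha : ℝ) (B : ℝ → Ω → ℝ) (D lam u : ℝ) : Set Ω :=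
  {ω | ∃ k : ℕ, (k:ℝ) * D ≤ lam ∧ u < Bstar alpha B ((k:ℝ) * D) ω}

/-- `H_{D,α}^{x,y}(λ)`. -/
def HxyLam {Ω : Type*} [MeasurableSpace Ω] (Q : Measure Ω) (alpha : ℝ)
    (B : ℝ → Ω → ℝ) (D lam x y : ℝ) : ℝ :=
  ∫ s : ℝ, Real.exp s *
    (Q (contExceeds alpha B lam (s + x) ∩ gridExceeds alpha B D lam (s + y))).toReal

/-- `Hxy` is the function `(x,y) ↦ H_{D,α}^{x,y}`. -/
def IsHxy {Ω : Type*} [MeasurableSpace Ω] (Q : Measure Ω) (alpha : ℝ)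
    (B : ℝ → Ω → ℝ) (D : ℝ) (Hxy : ℝ → ℝ → ℝ) : Prop :=
  ∀ x y : ℝ, 0 < Hxy x y ∧
    Tendsto (fun lam => HxyLam Q alpha B D lam x y / lam) atTop (nhds (Hxy x y))

/-- `H_{D₁,D₂,α}^{z₁,z₂}(λ)`. -/
def H2Lam {Ω : Type*} [MeasurableSpace Ω] (Q : Measure Ω) (alpha : ℝ)
    (B : ℝ → Ω → ℝ) (D1 D2 lam z1 z2 : ℝ) : ℝ :=
  ∫ s : ℝ, Real.exp s *
    (Q (gridExceeds alpha B D1 lam (s + z1) ∩ gridExceeds alpha B D2 lam (s + z2))).toReal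

/-- `H_{D₁,D₂,α}^{x,z₁,z₂}(λ)`. -/
def H3Lam {Ω : Type*} [MeasurableSpace Ω] (Q : Measure Ω) (alpha : ℝ)
    (B : ℝ → Ω → ℝ) (D1 D2 lam x z1 z2 : ℝ) : ℝ :=
  ∫ s : ℝ, Real.exp s *
    (Q (contExceeds alpha B lam (s + x) ∩ gridExceeds alpha B D1 lam (s + z1) ∩
        gridExceeds alpha B D2 lam (s + z2))).toReal

/-- `H2` is the function `(z₁,z₂) ↦ H_{D₁,D₂,α}^{z₁,z₂}`. -/
def IsH2 {Ω : Type*} [MeasurableSpace Ω] (Q : Measure Ω) (alpha : ℝ)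
    (B : ℝ → Ω → ℝ) (D1 D2 : ℝ) (H2 : ℝ → ℝ → ℝ) : Prop :=
  ∀ z1 z2 : ℝ, 0 < H2 z1 z2 ∧
    Tendsto (fun lam => H2Lam Q alpha B D1 D2 lam z1 z2 / lam) atTop (nhds (H2 z1 z2))

/-- `H3` is the function `(x,z₁,z₂) ↦ H_{D₁,D₂,α}^{x,z₁,z₂}`. -/
def IsH3 {Ω : Type*} [MeasurableSpace Ω] (Q : Measure Ω) (alpha : ℝ)
    (B : ℝ → Ω → ℝ) (D1 D2 : ℝ) (H3 : ℝ → ℝ → ℝ → ℝ) : Prop :=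
  ∀ x z1 z2 : ℝ, 0 < H3 x z1 z2 ∧
    Tendsto (fun lam => H3Lam Q alpha B D1 D2 lam x z1 z2 / lam) atTop (nhds (H3 x z1 z2))

/-- standard normal distribution function. -/
def stdNormCDF (x : ℝ) : ℝ := ((gaussianReal 0 1) (Iic x)).toReal

/-- standard normal survival function. -/
def stdNormSurvival (u : ℝ) : ℝ := ((gaussianReal 0 1) (Ioi u)).toReal

/-- `n_T = ⌊T/(S+R)⌋` with `S = T^a`, `R = T^b`. -/
def nBlocks (a b T : ℝ) : ℕ := ⌊T / (T ^ a + T ^ b)⌋₊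

/-- `𝐒 = ∪_{j=1}^{n_T} [(j-1)(S+R)+R, j(S+R))`. -/
def Sblocks (a b T : ℝ) : Set ℝ :=
  ⋃ j ∈ Finset.Icc 1 (nBlocks a b T),
    Ico (((j:ℝ) - 1) * (T ^ a + T ^ b) + T ^ b) ((j:ℝ) * (T ^ a + T ^ b))

/-- the grid is sparse or Pickands, with its associated normalization. -/
def SparseOrPickands {Ω' : Type*} [MeasurableSpace Ω'] (Q : Measure Ω')
    (B : ℝ → Ω' → ℝ) (C alpha : ℝ) (delta bdelta : ℝ → ℝ) : Prop :=
  (IsSparseGrid alpha delta ∧ bdelta = bSparse delta) ∨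
  (∃ D HD, IsPickandsGrid alpha D delta ∧ IsPickandsGridConst Q alpha B D HD ∧
    bdelta = bTH C alpha HD)

/-- the grid is sparse, Pickands or dense, with its associated normalization. -/
def GridWithNorm {Ω' : Type*} [MeasurableSpace Ω'] (Q : Measure Ω')
    (B : ℝ → Ω' → ℝ) (C alpha Halpha : ℝ) (delta bdelta : ℝ → ℝ) : Prop :=
  SparseOrPickands Q B C alpha delta bdelta ∨
  (IsDenseGrid alpha delta ∧ bdelta = bTH C alpha Halpha)

end Piterbarg
open Piterbarg

/-!
Let `R_T` be the matrix all of whose columns equal the first column of `Z_T`. By the continuous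
mapping theorem `R_T → (W, …, W)` in distribution, so it suffices that every entry of
`Z_T - R_T` tends to `0` in probability. For real `X_T ≤ Y_T` with the same limit law and a
bounded continuous monotone `g`, the nonnegative variable `g (Y_T) - g (X_T)` has expectation
tending to `0`, hence tends to `0` in probability. Taking for `g` the clamp to `[-r, r + ε]`,
with `r` so large that `|X_T| < r` with high probability (tightness), a gap `Y_T - X_T ≥ ε`
survives the clamping.
-/

open scoped Topology ENNReal BoundedContinuousFunction

namespace BoundedContinuousFunction

def clamp (a b : ℝ) : ℝ →ᵇ ℝ :=
  .mkOfBound ⟨fun x ↦ max a (min x b), by fun_prop⟩ (|a| + |b|) fun x y ↦ by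
    simp only [ContinuousMap.coe_mk, Real.dist_eq, abs_sub_le_iff, max_def, min_def]
    constructor <;> split_ifs <;>
      linarith [le_abs_self a, neg_abs_le a, le_abs_self b, neg_abs_le b]

theorem clamp_apply (a b x : ℝ) : clamp a b x = max a (min x b) := rfl

theorem monotone_clamp (a b : ℝ) : Monotone (clamp a b) :=
  fun _ _ hxy ↦ max_le_max le_rfl (min_le_min hxy le_rfl)

end BoundedContinuousFunction

namespace MeasureTheory

variable {ι Ω Ω' E : Type*} [MeasurableSpace Ω] [MeasurableSpace Ω'] [MeasurableSpace E]
  {μ : Measure Ω} {μ' : Measure Ω'} {l : Filter ι}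

theorem tendstoInDistribution_iff_forall_tendsto_integral [IsProbabilityMeasure μ]
    [IsProbabilityMeasure μ'] [TopologicalSpace E] [OpensMeasurableSpace E]
    {X : ι → Ω → E} {Z : Ω' → E} (hX : ∀ i, AEMeasurable (X i) μ) (hZ : AEMeasurable Z μ') :
    TendstoInDistribution X l Z (fun _ ↦ μ) μ' ↔
      ∀ g : E →ᵇ ℝ, Tendsto (fun i ↦ ∫ ω, g (X i ω) ∂μ) l (𝓝 (∫ ω, g (Z ω) ∂μ')) := by
  have hmap : ∀ g : E →ᵇ ℝ,
      ((fun i ↦ ∫ x, g x ∂(μ.map (X i))) = fun i ↦ ∫ ω, g (X i ω) ∂μ) ∧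
      ∫ x, g x ∂(μ'.map Z) = ∫ ω, g (Z ω) ∂μ' := fun g ↦
    ⟨funext fun i ↦ integral_map (hX i) g.continuous.aestronglyMeasurable,
      integral_map hZ g.continuous.aestronglyMeasurable⟩
  constructor
  · intro h g
    have := ProbabilityMeasure.tendsto_iff_forall_integral_tendsto.1 h.tendsto g
    simpa only [ProbabilityMeasure.coe_mk, (hmap g).1, (hmap g).2] using this
  · intro h
    refine ⟨hX, hZ, ProbabilityMeasure.tendsto_iff_forall_integral_tendsto.2 fun g ↦ ?_⟩
    simpa only [ProbabilityMeasure.coe_mk, (hmap g).1, (hmap g).2] using h g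

theorem tendsto_measure_le_norm_atTop [NormedAddCommGroup E] [OpensMeasurableSpace E]
    (ν : Measure E) [IsFiniteMeasure ν] :
    Tendsto (fun r : ℝ ↦ ν {x | r ≤ ‖x‖}) atTop (𝓝 0) := by
  have hempty : ⋂ r : ℝ, {x : E | r ≤ ‖x‖} = ∅ :=
    eq_empty_of_forall_notMem fun x hx ↦ by
      have : ‖x‖ + 1 ≤ ‖x‖ := mem_iInter.1 hx (‖x‖ + 1)
      linarith
  have := tendsto_measure_iInter_atTop (μ := ν)
    (fun r ↦ (isClosed_le continuous_const continuous_norm).measurableSet.nullMeasurableSet)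
    (fun r s hrs x (hx : s ≤ ‖x‖) ↦ hrs.trans hx) ⟨0, measure_ne_top _ _⟩
  rwa [hempty, measure_empty] at this

theorem TendstoInDistribution.exists_eventually_measure_le_norm_lt [IsProbabilityMeasure μ]
    [IsProbabilityMeasure μ'] [NormedAddCommGroup E] [BorelSpace E] {X : ι → Ω → E}
    {Z : Ω' → E} (h : TendstoInDistribution X l Z (fun _ ↦ μ) μ') {δ : ℝ≥0∞} (hδ : 0 < δ) :
    ∃ r : ℝ, ∀ᶠ i in l, μ {ω | r ≤ ‖X i ω‖} < δ := by
  obtain ⟨r, hr⟩ := ((tendsto_measure_le_norm_atTop (μ'.map Z)).eventually_lt_const hδ).exists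
  have hclosed : IsClosed {x : E | r ≤ ‖x‖} := isClosed_le continuous_const continuous_norm
  refine ⟨r, (eventually_lt_of_limsup_lt
    ((ProbabilityMeasure.limsup_measure_closed_le_of_tendsto h.tendsto hclosed).trans_lt hr)).mono
    fun i hi ↦ ?_⟩
  rwa [ProbabilityMeasure.coe_mk, Measure.map_apply_of_aemeasurable (h.forall_aemeasurable i)
    hclosed.measurableSet] at hi

theorem tendstoInMeasure_zero_of_tendsto_integral [IsFiniteMeasure μ] {f : ι → Ω → ℝ}
    (hf_nonneg : ∀ i, 0 ≤ᵐ[μ] f i) (hf_int : ∀ i, Integrable (f i) μ)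
    (h : Tendsto (fun i ↦ ∫ ω, f i ω ∂μ) l (𝓝 0)) : TendstoInMeasure μ f l 0 := by
  rw [tendstoInMeasure_iff_measureReal_norm]
  intro ε hε
  have hmarkov : ∀ i, μ.real {ω | ε ≤ ‖f i ω - (0 : Ω → ℝ) ω‖} ≤ (∫ ω, f i ω ∂μ) / ε := by
    intro i
    have hnorm : ∫ ω, ‖f i ω‖ ∂μ = ∫ ω, f i ω ∂μ :=
      integral_congr_ae ((hf_nonneg i).mono fun ω hω ↦ Real.norm_of_nonneg hω)
    rw [le_div_iff₀ hε, mul_comm, ← hnorm]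
    simpa using mul_meas_ge_le_integral_of_nonneg (ae_of_all _ fun ω ↦ norm_nonneg (f i ω))
      (hf_int i).norm ε
  exact squeeze_zero (fun i ↦ measureReal_nonneg) hmarkov (by simpa using h.div_const ε)

theorem tendstoInMeasure_pi {κ : Type*} [Fintype κ] {F : κ → Type*}
    [∀ k, PseudoEMetricSpace (F k)] {f : ι → Ω → ∀ k, F k} {g : Ω → ∀ k, F k}
    (h : ∀ k, TendstoInMeasure μ (fun i ω ↦ f i ω k) l fun ω ↦ g ω k) :
    TendstoInMeasure μ f l g := by
  intro ε hε
  have hsub : ∀ i, {ω | ε ≤ edist (f i ω) (g ω)} ⊆ ⋃ k, {ω | ε ≤ edist (f i ω k) (g ω k)} := by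
    intro i ω (hω : ε ≤ edist (f i ω) (g ω))
    rw [edist_pi_def] at hω
    obtain ⟨k, -, hk⟩ := (Finset.le_sup_iff hε).1 hω
    exact mem_iUnion.2 ⟨k, hk⟩
  refine tendsto_of_tendsto_of_tendsto_of_le_of_le tendsto_const_nhds
    (by simpa using tendsto_finsetSum Finset.univ fun k _ ↦ h k ε hε)
    (fun i ↦ zero_le) fun i ↦ (measure_mono (hsub i)).trans (measure_iUnion_fintype_le _ _)

section SameLimit

variable [IsProbabilityMeasure μ] [IsProbabilityMeasure μ'] {X Y : ι → Ω → ℝ} {Z : Ω' → ℝ}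

theorem TendstoInDistribution.tendstoInMeasure_comp_sub_comp_of_ae_le
    (hX : TendstoInDistribution X l Z (fun _ ↦ μ) μ')
    (hY : TendstoInDistribution Y l Z (fun _ ↦ μ) μ') (hle : ∀ i, X i ≤ᵐ[μ] Y i)
    {g : ℝ →ᵇ ℝ} (hg : Monotone g) :
    TendstoInMeasure μ (fun i ω ↦ g (Y i ω) - g (X i ω)) l 0 := by
  have hint : ∀ {V : Ω → ℝ}, AEMeasurable V μ → Integrable (fun ω ↦ g (V ω)) μ :=
    fun hV ↦ (g.integrable (μ.map _)).comp_aemeasurable hV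
  have hXi := hX.forall_aemeasurable
  have hYi := hY.forall_aemeasurable
  refine tendstoInMeasure_zero_of_tendsto_integral
    (fun i ↦ (hle i).mono fun ω hω ↦ sub_nonneg.2 (hg hω))
    (fun i ↦ (hint (hYi i)).sub (hint (hXi i))) ?_
  have hlim := ((tendstoInDistribution_iff_forall_tendsto_integral hYi hY.aemeasurable_limit).1
    hY g).sub ((tendstoInDistribution_iff_forall_tendsto_integral hXi hX.aemeasurable_limit).1
    hX g)
  rw [sub_self] at hlim
  exact hlim.congr fun i ↦ (integral_sub (hint (hYi i)) (hint (hXi i))).symm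

theorem TendstoInDistribution.tendstoInMeasure_sub_of_ae_le
    (hX : TendstoInDistribution X l Z (fun _ ↦ μ) μ')
    (hY : TendstoInDistribution Y l Z (fun _ ↦ μ) μ') (hle : ∀ i, X i ≤ᵐ[μ] Y i) :
    TendstoInMeasure μ (X - Y) l 0 := by
  rw [tendstoInMeasure_iff_norm]
  intro ε hε
  rw [ENNReal.tendsto_nhds_zero]
  intro δ hδ
  obtain ⟨r, hr⟩ := hX.exists_eventually_measure_le_norm_lt (ENNReal.half_pos hδ.ne')
  have hg := (tendstoInMeasure_iff_norm.1 (hX.tendstoInMeasure_comp_sub_comp_of_ae_le hY hle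
    (BoundedContinuousFunction.monotone_clamp (-r) (r + ε)))) ε hε
  set g := BoundedContinuousFunction.clamp (-r) (r + ε) with hg_def
  simp only [Pi.sub_apply, Pi.zero_apply, sub_zero] at hg ⊢
  filter_upwards [hr, ENNReal.tendsto_nhds_zero.1 hg _ (ENNReal.half_pos hδ.ne')]
    with i hi_tail hi_clamp
  have hsub : {ω | ε ≤ ‖X i ω - Y i ω‖} ≤ᵐ[μ]
      ({ω | r ≤ ‖X i ω‖} ∪ {ω | ε ≤ ‖g (Y i ω) - g (X i ω)‖} : Set Ω) := by
    filter_upwards [hle i] with ω hω (hgap : ε ≤ ‖X i ω - Y i ω‖)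
    refine or_iff_not_imp_left.2 fun hXr ↦ ?_
    rw [Real.norm_eq_abs, abs_sub_comm, abs_of_nonneg (sub_nonneg.2 hω)] at hgap
    have hXr' : |X i ω| < r := by simpa using hXr
    rw [abs_lt] at hXr'
    change ε ≤ ‖g (Y i ω) - g (X i ω)‖
    rw [hg_def, BoundedContinuousFunction.clamp_apply, BoundedContinuousFunction.clamp_apply]
    refine le_trans ?_ (le_abs_self _)
    simp only [max_def, min_def]
    split_ifs <;> linarith
  calc μ {ω | ε ≤ ‖X i ω - Y i ω‖}
      ≤ μ {ω | r ≤ ‖X i ω‖} + μ {ω | ε ≤ ‖g (Y i ω) - g (X i ω)‖} :=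
        (measure_mono_ae hsub).trans (measure_union_le _ _)
    _ ≤ δ / 2 + δ / 2 := add_le_add hi_tail.le hi_clamp
    _ = δ := ENNReal.add_halves δ

end SameLimit

end MeasureTheory

theorem dominated_columns_joint_convergence_general
    {Ω : Type*} [MeasurableSpace Ω] (P : Measure Ω) [IsProbabilityMeasure P]
    {Ω' : Type*} [MeasurableSpace Ω'] (P' : Measure Ω') [IsProbabilityMeasure P']
    {p m : ℕ} (hm : 0 < m)
    (Z : ℝ → Fin p → Fin m → Ω → ℝ) (W : Fin p → Ω' → ℝ)
    (hmeasZ : ∀ T i j, Measurable (Z T i j)) (hmeasW : ∀ i, Measurable (W i))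
    (hconv : ∀ j : Fin m, ∀ g : BoundedContinuousFunction (Fin p → ℝ) ℝ,
      Tendsto (fun T => ∫ ω, g (fun i => Z T i j ω) ∂P) atTop
        (nhds (∫ ω, g (fun i => W i ω) ∂P')))
    (hdom : ∀ (T : ℝ) (i : Fin p) (j : Fin m),
      ∀ᵐ ω ∂P, Z T i j ω ≤ Z T i ⟨0, hm⟩ ω) :
    ∀ g : BoundedContinuousFunction (Fin p × Fin m → ℝ) ℝ,
      Tendsto (fun T => ∫ ω, g (fun q => Z T q.1 q.2 ω) ∂P) atTop
        (nhds (∫ ω, g (fun q => W q.1 ω) ∂P')) := by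
  have hcol : ∀ j, TendstoInDistribution (fun T ω i ↦ Z T i j ω) atTop (fun ω i ↦ W i ω)
      (fun _ ↦ P) P' := fun j ↦
    (tendstoInDistribution_iff_forall_tendsto_integral (by fun_prop) (by fun_prop)).2 (hconv j)
  have hgap : ∀ q : Fin p × Fin m,
      TendstoInMeasure P (fun T ω ↦ Z T q.1 q.2 ω - Z T q.1 ⟨0, hm⟩ ω) atTop 0 := fun q ↦
    ((hcol q.2).continuous_comp (continuous_apply q.1)).tendstoInMeasure_sub_of_ae_le
      ((hcol ⟨0, hm⟩).continuous_comp (continuous_apply q.1)) (hdom · q.1 q.2)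
  have hrep : TendstoInDistribution (fun T ω (q : Fin p × Fin m) ↦ Z T q.1 ⟨0, hm⟩ ω) atTop
      (fun ω q ↦ W q.1 ω) (fun _ ↦ P) P' :=
    (hcol ⟨0, hm⟩).continuous_comp
      (show Continuous fun (v : Fin p → ℝ) (q : Fin p × Fin m) ↦ v q.1 by fun_prop)
  have hmatrix := tendstoInDistribution_of_tendstoInMeasure_sub
    (fun T ω (q : Fin p × Fin m) ↦ Z T q.1 q.2 ω) _ hrep (tendstoInMeasure_pi hgap)
    (fun T ↦ by fun_prop)
  exact (tendstoInDistribution_iff_forall_tendsto_integral (fun T ↦ by fun_prop)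
    (by fun_prop)).1 hmatrix

/-- Lemma A.4: if each column of a random matrix converges in distribution to the same
random vector `W` and all columns are a.s. dominated by the first one, then the whole
matrix converges in distribution to `(W,…,W)`. -/
theorem dominated_columns_joint_convergence
    {Ω : Type*} [MeasurableSpace Ω] (P : Measure Ω) [IsProbabilityMeasure P]
    {Ω' : Type*} [MeasurableSpace Ω'] (P' : Measure Ω') [IsProbabilityMeasure P']
    {p m : ℕ} (hp : 0 < p) (hm : 0 < m)
    (Z : ℝ → Fin p → Fin m → Ω → ℝ) (W : Fin p → Ω' → ℝ)
    (hmeasZ : ∀ T i j, Measurable (Z T i j)) (hmeasW : ∀ i, Measurable (W i))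
    (hconv : ∀ j : Fin m, ∀ g : BoundedContinuousFunction (Fin p → ℝ) ℝ,
      Tendsto (fun T => ∫ ω, g (fun i => Z T i j ω) ∂P) atTop
        (nhds (∫ ω, g (fun i => W i ω) ∂P')))
    (hdom : ∀ (T : ℝ) (i : Fin p) (j : Fin m),
      ∀ᵐ ω ∂P, Z T i j ω ≤ Z T i ⟨0, hm⟩ ω) :
    ∀ g : BoundedContinuousFunction (Fin p × Fin m → ℝ) ℝ,
      Tendsto (fun T => ∫ ω, g (fun q => Z T q.1 q.2 ω) ∂P) atTop
        (nhds (∫ ω, g (fun q => W q.1 ω) ∂P')) :=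
  dominated_columns_joint_convergence_general P P' hm Z W hmeasZ hmeasW hconv hdom
end
end

section
/- Let p ≥ 1 be an integer and D_1, D_2 > 0 with D_1 ≠ D_2. Define f(x,y_1,y_2) = e^{−x} + e^{−y_1} + e^{−y_2} − H_{D_1,α}^{ln H_α + x, ln H_{D_1,α} + y_1} − H_{D_2,α}^{ln H_α + x, ln H_{D_2,α} + y_2} − H_{D_1,D_2,α}^{ln H_{D_1,α} + y_1, ln H_{D_2,α} + y_2} + H_{D_1,D_2,α}^{ln H_α + x, ln H_{D_1,α} + y_1, ln H_{D_2,α} + y_2} for x, y_1, y_2 ∈ ℝ, and define the Piterbarg distribution function G : ℝ^{3p} → ℝ by G(x, y_1, y_2) = exp( − Σ_{k=1}^p f(x_k, y_{k1}, y_{k2}) ) for x, y_1, y_2 ∈ ℝ^p. Then G is max-stable: for every integer n ≥ 1 and all x, y_1, y_2 ∈ ℝ^p, ( G(x + (ln n)·1, y_1 + (ln n)·1, y_2 + (ln n)·1) )^n = G(x, y_1, y_2), where 1 denotes the all-ones vector in ℝ^p. -/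
open MeasureTheory ProbabilityTheory Real Set Filter

noncomputable section

open Piterbarg

/-- Translation invariance of the exponential integral. -/
lemma shift_exp_integral (g : ℝ → ℝ) (c : ℝ) :
    (∫ s : ℝ, Real.exp s * g (s + c)) = Real.exp (-c) * ∫ s : ℝ, Real.exp s * g s := by
  have h : ∀ s : ℝ, Real.exp s * g (s + c)
      = Real.exp (-c) * (Real.exp (s + c) * g (s + c)) := by
    intro s
    rw [← mul_assoc, ← Real.exp_add]
    congr 2
    ring
  calc (∫ s : ℝ, Real.exp s * g (s + c))
      = ∫ s : ℝ, Real.exp (-c) * (Real.exp (s + c) * g (s + c)) := by simp_rw [h]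
    _ = Real.exp (-c) * ∫ s : ℝ, Real.exp (s + c) * g (s + c) := integral_const_mul _ _
    _ = Real.exp (-c) * ∫ s : ℝ, Real.exp s * g s := by
        rw [integral_add_right_eq_self (fun s => Real.exp s * g s) c]

lemma HxyLam_shift {Ω' : Type*} [MeasurableSpace Ω'] (Q : Measure Ω') (alpha : ℝ)
    (B : ℝ → Ω' → ℝ) (D lam x y c : ℝ) :
    HxyLam Q alpha B D lam (x + c) (y + c) = Real.exp (-c) * HxyLam Q alpha B D lam x y := by
  have h1 : ∀ s : ℝ, s + (x + c) = (s + c) + x := fun s => by ring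
  have h2 : ∀ s : ℝ, s + (y + c) = (s + c) + y := fun s => by ring
  simp_rw [HxyLam, h1, h2]
  exact shift_exp_integral
    (fun t => (Q (contExceeds alpha B lam (t + x) ∩ gridExceeds alpha B D lam (t + y))).toReal) c

lemma H2Lam_shift {Ω' : Type*} [MeasurableSpace Ω'] (Q : Measure Ω') (alpha : ℝ)
    (B : ℝ → Ω' → ℝ) (D1 D2 lam z1 z2 c : ℝ) :
    H2Lam Q alpha B D1 D2 lam (z1 + c) (z2 + c)
      = Real.exp (-c) * H2Lam Q alpha B D1 D2 lam z1 z2 := by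
  have h1 : ∀ s : ℝ, s + (z1 + c) = (s + c) + z1 := fun s => by ring
  have h2 : ∀ s : ℝ, s + (z2 + c) = (s + c) + z2 := fun s => by ring
  simp_rw [H2Lam, h1, h2]
  exact shift_exp_integral
    (fun t => (Q (gridExceeds alpha B D1 lam (t + z1) ∩
      gridExceeds alpha B D2 lam (t + z2))).toReal) c

lemma H3Lam_shift {Ω' : Type*} [MeasurableSpace Ω'] (Q : Measure Ω') (alpha : ℝ)
    (B : ℝ → Ω' → ℝ) (D1 D2 lam x z1 z2 c : ℝ) :
    H3Lam Q alpha B D1 D2 lam (x + c) (z1 + c) (z2 + c)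
      = Real.exp (-c) * H3Lam Q alpha B D1 D2 lam x z1 z2 := by
  have h0 : ∀ s : ℝ, s + (x + c) = (s + c) + x := fun s => by ring
  have h1 : ∀ s : ℝ, s + (z1 + c) = (s + c) + z1 := fun s => by ring
  have h2 : ∀ s : ℝ, s + (z2 + c) = (s + c) + z2 := fun s => by ring
  simp_rw [H3Lam, h0, h1, h2]
  exact shift_exp_integral
    (fun t => (Q (contExceeds alpha B lam (t + x) ∩ gridExceeds alpha B D1 lam (t + z1) ∩
      gridExceeds alpha B D2 lam (t + z2))).toReal) c

lemma Piterbarg.IsHxy.shift {Ω' : Type*} [MeasurableSpace Ω'] {Q : Measure Ω'} {alpha : ℝ}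
    {B : ℝ → Ω' → ℝ} {D : ℝ} {Hxy : ℝ → ℝ → ℝ} (h : IsHxy Q alpha B D Hxy)
    (x y c : ℝ) : Hxy (x + c) (y + c) = Real.exp (-c) * Hxy x y := by
  refine tendsto_nhds_unique (h (x + c) (y + c)).2 ?_
  have := ((h x y).2.const_mul (Real.exp (-c)))
  simp_rw [HxyLam_shift, mul_div_assoc]
  exact this

lemma Piterbarg.IsH2.shift {Ω' : Type*} [MeasurableSpace Ω'] {Q : Measure Ω'} {alpha : ℝ}
    {B : ℝ → Ω' → ℝ} {D1 D2 : ℝ} {H2 : ℝ → ℝ → ℝ} (h : IsH2 Q alpha B D1 D2 H2)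
    (z1 z2 c : ℝ) : H2 (z1 + c) (z2 + c) = Real.exp (-c) * H2 z1 z2 := by
  refine tendsto_nhds_unique (h (z1 + c) (z2 + c)).2 ?_
  have := ((h z1 z2).2.const_mul (Real.exp (-c)))
  simp_rw [H2Lam_shift, mul_div_assoc]
  exact this

lemma Piterbarg.IsH3.shift {Ω' : Type*} [MeasurableSpace Ω'] {Q : Measure Ω'} {alpha : ℝ}
    {B : ℝ → Ω' → ℝ} {D1 D2 : ℝ} {H3 : ℝ → ℝ → ℝ → ℝ} (h : IsH3 Q alpha B D1 D2 H3)
    (x z1 z2 c : ℝ) : H3 (x + c) (z1 + c) (z2 + c) = Real.exp (-c) * H3 x z1 z2 := by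
  refine tendsto_nhds_unique (h (x + c) (z1 + c) (z2 + c)).2 ?_
  have := ((h x z1 z2).2.const_mul (Real.exp (-c)))
  simp_rw [H3Lam_shift, mul_div_assoc]
  exact this

/-- The Piterbarg distribution `G` built from the two-grid Pickands constants is
max-stable: `(G(x + ln n, y₁ + ln n, y₂ + ln n))ⁿ = G(x, y₁, y₂)`. -/
theorem piterbarg_distribution_max_stable
    (alpha : ℝ) (halpha : 0 < alpha) (halpha2 : alpha ≤ 2)
    {Ω' : Type*} [MeasurableSpace Ω'] (Q : Measure Ω') [IsProbabilityMeasure Q]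
    (B : ℝ → Ω' → ℝ) (hB : FBMHyp Q alpha B)
    (Halpha : ℝ) (hHalpha : IsPickandsConst Q alpha B Halpha)
    (D1 D2 : ℝ) (hD1 : 0 < D1) (hD2 : 0 < D2) (hD : D1 ≠ D2)
    (HD1 HD2 : ℝ)
    (hHD1 : IsPickandsGridConst Q alpha B D1 HD1)
    (hHD2 : IsPickandsGridConst Q alpha B D2 HD2)
    (Hxy1 : ℝ → ℝ → ℝ) (hHxy1 : IsHxy Q alpha B D1 Hxy1)
    (Hxy2 : ℝ → ℝ → ℝ) (hHxy2 : IsHxy Q alpha B D2 Hxy2)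
    (H2f : ℝ → ℝ → ℝ) (hH2f : IsH2 Q alpha B D1 D2 H2f)
    (H3f : ℝ → ℝ → ℝ → ℝ) (hH3f : IsH3 Q alpha B D1 D2 H3f)
    {p : ℕ} (hp : 1 ≤ p)
    (f : ℝ → ℝ → ℝ → ℝ)
    (hf : ∀ x y1 y2 : ℝ, f x y1 y2 =
      Real.exp (-x) + Real.exp (-y1) + Real.exp (-y2) -
        Hxy1 (Real.log Halpha + x) (Real.log HD1 + y1) -
        Hxy2 (Real.log Halpha + x) (Real.log HD2 + y2) -
        H2f (Real.log HD1 + y1) (Real.log HD2 + y2) +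
        H3f (Real.log Halpha + x) (Real.log HD1 + y1) (Real.log HD2 + y2))
    (G : (Fin p → ℝ) → (Fin p → ℝ) → (Fin p → ℝ) → ℝ)
    (hG : ∀ x y1 y2 : Fin p → ℝ,
      G x y1 y2 = Real.exp (- ∑ k, f (x k) (y1 k) (y2 k))) :
    ∀ n : ℕ, 1 ≤ n → ∀ x y1 y2 : Fin p → ℝ,
      (G (fun k => x k + Real.log n) (fun k => y1 k + Real.log n)
          (fun k => y2 k + Real.log n)) ^ n = G x y1 y2 := by
  intro n hn x y1 y2
  set c := Real.log n with hc
  have hnpos : (0:ℝ) < n := by exact_mod_cast hn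
  have hf_shift : ∀ a b d : ℝ,
      f (a + c) (b + d + (c - d)) (b + d + (c - d)) = 0 → True := fun _ _ _ _ => trivial
  have key : ∀ a b d : ℝ, f (a + c) (b + c) (d + c) = Real.exp (-c) * f a b d := by
    intro a b d
    have e1 : Real.log Halpha + (a + c) = (Real.log Halpha + a) + c := by ring
    have e2 : Real.log HD1 + (b + c) = (Real.log HD1 + b) + c := by ring
    have e3 : Real.log HD2 + (d + c) = (Real.log HD2 + d) + c := by ring
    rw [hf, hf, e1, e2, e3,
      hHxy1.shift, hHxy2.shift, hH2f.shift, hH3f.shift]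
    have : ∀ u : ℝ, Real.exp (-(u + c)) = Real.exp (-c) * Real.exp (-u) := by
      intro u; rw [← Real.exp_add]; congr 1; ring
    rw [this a, this b, this d]
    ring
  rw [hG, hG]
  simp_rw [key]
  rw [← Finset.mul_sum, ← Real.exp_nat_mul]
  congr 1
  have hexp : Real.exp (-c) = (n : ℝ)⁻¹ := by
    rw [hc, ← Real.log_inv, Real.exp_log (by positivity)]
  rw [hexp]
  field_simp
end
end
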